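/- For 1 < α < 2 and |z| ≤ 1 with z ∈ ℂ, the series ∑_{k=0}^∞ ω_k^α z^k converges absolutely and equals (1 - z)^α, where the power is the principal branch. -/

import Mathlib

/-!
Inside the open disc the series is Newton's binomial series of `(1 + w) ^ α` at `w = -z`.
For `1 ≤ α ≤ 2` the coefficients `ω_k^α` are nonnegative from `k = 2` on, and by Pascal's rule
their partial sums are the coefficients `ω_n^{α-1}`, which are bounded by `1`. Hence
`∑ |ω_k^α| < ∞`, the series converges uniformly on the closed disc, and since both sides are
continuous there, the identity extends from the open disc to its boundary.
-/

noncomputable def genBinom (α : ℝ) (k : ℕ) : ℝ :=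
  (∏ i ∈ Finset.range k, (α - i)) / (Nat.factorial k)

noncomputable def omegaCoeff (α : ℝ) (k : ℕ) : ℝ := (-1 : ℝ) ^ k * genBinom α k

open Finset Metric Set

lemma genBinom_eq_choose (α : ℝ) (k : ℕ) : genBinom α k = Ring.choose α k := by
  rw [Ring.choose_eq_smul, genBinom, ← descPochhammer_eval_eq_prod_range,
    ← Polynomial.aeval_eq_smeval, ← descPochhammer_map (algebraMap ℤ ℝ),
    Polynomial.eval_map_algebraMap, smul_eq_mul, div_eq_inv_mul]

lemma omegaCoeff_eq_neg_one_pow_mul_choose (α : ℝ) (k : ℕ) :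
    omegaCoeff α k = (-1) ^ k * Ring.choose α k := by
  rw [omegaCoeff, genBinom_eq_choose]

lemma omegaCoeff_zero (α : ℝ) : omegaCoeff α 0 = 1 := by
  simp [omegaCoeff, genBinom]

lemma omegaCoeff_succ (α : ℝ) (k : ℕ) :
    omegaCoeff α (k + 1) = (k - α) / (k + 1) * omegaCoeff α k := by
  simp only [omegaCoeff, genBinom, prod_range_succ, Nat.factorial_succ, Nat.cast_mul, pow_succ]
  field_simp
  push_cast
  ring

lemma sum_range_succ_omegaCoeff (α : ℝ) (n : ℕ) :
    ∑ k ∈ range (n + 1), omegaCoeff α k = omegaCoeff (α - 1) n := by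
  induction n with
  | zero => simp [omegaCoeff_zero]
  | succ n ih =>
    have pascal := Ring.choose_succ_succ (α - 1) n
    rw [sub_add_cancel] at pascal
    rw [sum_range_succ, ih]
    simp only [omegaCoeff_eq_neg_one_pow_mul_choose, pascal, pow_succ]
    ring

lemma abs_omegaCoeff_le_one {β : ℝ} (h0 : -1 ≤ β) (h1 : β ≤ 1) (k : ℕ) :
    |omegaCoeff β k| ≤ 1 := by
  induction k with
  | zero => simp [omegaCoeff_zero]
  | succ k ih =>
    have hk : (0 : ℝ) < k + 1 := by positivity
    have ratio : |((k : ℝ) - β) / (k + 1)| ≤ 1 := by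
      rw [abs_div, abs_of_pos hk, div_le_one hk, abs_le]
      constructor <;> linarith
    rw [omegaCoeff_succ, abs_mul]
    exact mul_le_one₀ ratio (abs_nonneg _) ih

lemma omegaCoeff_add_two_nonneg {α : ℝ} (h1 : 1 ≤ α) (h2 : α ≤ 2) (k : ℕ) :
    0 ≤ omegaCoeff α (k + 2) := by
  induction k with
  | zero =>
    simp only [omegaCoeff_succ, omegaCoeff_zero]
    norm_num
    nlinarith
  | succ k ih =>
    rw [omegaCoeff_succ]
    have : (0 : ℝ) ≤ ((k + 2 : ℕ) - α) / ((k + 2 : ℕ) + 1) := by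
      apply div_nonneg <;> push_cast <;> linarith [(k.cast_nonneg : (0 : ℝ) ≤ k)]
    exact mul_nonneg this ih

lemma summable_abs_omegaCoeff {α : ℝ} (h1 : 1 ≤ α) (h2 : α ≤ 2) :
    Summable (fun k => |omegaCoeff α k|) := by
  rw [← summable_nat_add_iff 2]
  have tail_sum (n : ℕ) : ∑ k ∈ range n, |omegaCoeff α (k + 2)| ≤ α := by
    have hsplit := sum_range_succ_omegaCoeff α (n + 1)
    rw [sum_range_succ', sum_range_succ', omegaCoeff_succ α 0, omegaCoeff_zero] at hsplit
    have hbound := (abs_le.1 (abs_omegaCoeff_le_one (β := α - 1) (by linarith) (by linarith)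
      (n + 1))).2
    simp only [abs_of_nonneg (omegaCoeff_add_two_nonneg h1 h2 _)]
    norm_num at hsplit
    linarith
  exact summable_of_sum_range_le (fun _ => abs_nonneg _) tail_sum

lemma hasSum_omegaCoeff_mul_pow_of_norm_lt_one (α : ℝ) {z : ℂ} (hz : ‖z‖ < 1) :
    HasSum (fun k => (omegaCoeff α k : ℂ) * z ^ k) ((1 - z) ^ (α : ℂ)) := by
  have h := Complex.one_add_cpow_hasFPowerSeriesOnBall_zero (a := α) |>.hasSum (y := -z)
    (by simpa [Metric.mem_eball, edist_zero_right, ← ofReal_norm] using hz)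
  have hterm (k : ℕ) : (omegaCoeff α k : ℂ) * z ^ k = Ring.choose (α : ℂ) k * (-z) ^ k := by
    rw [omegaCoeff_eq_neg_one_pow_mul_choose, neg_pow]
    push_cast
    ring
  simpa only [hterm, binomialSeries, FormalMultilinearSeries.ofScalars_apply_eq, zero_add,
    smul_eq_mul, zero_sub, ← sub_eq_add_neg] using h

lemma norm_mul_pow_le {a z : ℂ} (hz : ‖z‖ ≤ 1) (k : ℕ) : ‖a * z ^ k‖ ≤ ‖a‖ := by
  rw [norm_mul, norm_pow]
  exact mul_le_of_le_one_right (norm_nonneg a) (pow_le_one₀ (norm_nonneg z) hz)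

lemma continuousOn_tsum_mul_pow {a : ℕ → ℂ} (ha : Summable (fun k => ‖a k‖)) :
    ContinuousOn (fun z => ∑' k, a k * z ^ k) (closedBall 0 1) :=
  continuousOn_tsum (fun k => by fun_prop) ha
    (fun k z hz => norm_mul_pow_le (mem_closedBall_zero_iff.1 hz) k)

lemma continuousOn_one_sub_cpow {a : ℂ} (ha : 0 < a.re) :
    ContinuousOn (fun z : ℂ => (1 - z) ^ a) (closedBall 0 1) := by
  intro z hz
  have hre : 0 ≤ (1 - z).re := by
    rw [Complex.sub_re, Complex.one_re, sub_nonneg]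
    exact (Complex.re_le_norm z).trans (mem_closedBall_zero_iff.1 hz)
  exact ((Complex.continuousAt_cpow_const_of_re_pos (Or.inl hre) ha).comp
    (by fun_prop : ContinuousAt (fun z : ℂ => 1 - z) z)).continuousWithinAt

theorem stmt4 (α : ℝ) (hα1 : 1 < α) (hα2 : α < 2) (z : ℂ) (hz : ‖z‖ ≤ 1) :
    Summable (fun k : ℕ => ‖(omegaCoeff α k : ℂ) * z ^ k‖) ∧
      HasSum (fun k : ℕ => (omegaCoeff α k : ℂ) * z ^ k) ((1 - z) ^ (α : ℂ)) := by
  have hcoeff : Summable (fun k => ‖(omegaCoeff α k : ℂ)‖) := by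
    simpa only [Complex.norm_real, Real.norm_eq_abs] using
      summable_abs_omegaCoeff hα1.le hα2.le
  have hsum : Summable (fun k : ℕ => ‖(omegaCoeff α k : ℂ) * z ^ k‖) :=
    hcoeff.of_nonneg_of_le (fun _ => norm_nonneg _) (fun k => norm_mul_pow_le hz k)
  have hinside : EqOn (fun w => ∑' k, (omegaCoeff α k : ℂ) * w ^ k) (fun w => (1 - w) ^ (α : ℂ))
      (ball 0 1) := fun w hw =>
    (hasSum_omegaCoeff_mul_pow_of_norm_lt_one α (mem_ball_zero_iff.1 hw)).tsum_eq
  have hdisc := hinside.of_subset_closure (continuousOn_tsum_mul_pow hcoeff)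
    (continuousOn_one_sub_cpow (by simpa using zero_lt_one.trans hα1)) ball_subset_closedBall
    (closure_ball 0 one_ne_zero).ge
  refine ⟨hsum, ?_⟩
  have hz_sum := hdisc (mem_closedBall_zero_iff.2 hz)
  dsimp only at hz_sum
  exact hz_sum ▸ hsum.of_norm.hasSum
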